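/- arXiv:math/0610281 — 2 statements merged into one kernel-verified Lean document; each statement's English description precedes it below -/
import Mathlib

section
/- For every positive integer n, ∑_{j=1}^{n} (-1)^j · C(n+j,j) · C(n,j) · j^2 · (2(H_{n+j} − H_j)^2 − (H_{n+j}^{(2)} − H_j^{(2)})) + ∑_{j=1}^{n} (-1)^j / (C(n+j,j) · C(n,j)) = n(2n−1)(-1)^n, as an identity of rational numbers. -/
/-!
Write `e_{j,i} = 1/(j+i)`, so that `H_{n+j} - H_j = ∑_{i=1}^n e_{j,i}` and
`H_{n+j}^{(2)} - H_j^{(2)} = ∑_{i=1}^n e_{j,i}^2`. Expanding the square and exchanging the sums,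
the first sum becomes `2 ∑_{i,i'} K(i,i') - ∑_i K(i,i)` with
`K(i,i') = ∑_j (-1)^j C(n+j,j) C(n,j) j^2 / ((j+i)(j+i'))`.

Since `n! C(n+j,j) j^2 = j ∏_{t=0}^n (j+t)`, we have `n! C(n+j,j) j^2/(j+i) = q_i(j)` for the
monic polynomial `q_i = X ∏_{0 ≤ t ≤ n, t ≠ i} (X+t)` of degree `n+1`. Dividing, `q_i(x)/(x+i')` is a
monic polynomial of degree `n` plus `q_i(-i')/(x+i')`. The alternating binomial sum
`∑_j (-1)^j C(n,j) f(j)`, i.e. an `n`-th forward difference, sends the polynomial part to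
`(-1)^n n!` and `1/(x+i')` to `n!/∏_{t=0}^n (i'+t)` (partial fractions). As `q_i(-i') = 0` for
`i' ≠ i`, this gives `K(i,i') = (-1)^n - δ_{i,i'} (-1)^i/(C(n+i,i) C(n,i))`, and the diagonal
corrections cancel the second sum.
-/

open Finset

/-- Harmonic numbers `H_n = ∑_{j=1}^n 1/j`. -/
def H (n : ℕ) : ℚ := ∑ j ∈ Icc 1 n, (1 : ℚ) / j

/-- Generalized harmonic numbers `H_n^{(2)} = ∑_{j=1}^n 1/j^2`. -/
def H2 (n : ℕ) : ℚ := ∑ j ∈ Icc 1 n, (1 : ℚ) / (j : ℚ) ^ 2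

open Polynomial Nat fwdDiff

section CommRing

variable {R : Type*} [CommRing R]

theorem sum_range_neg_one_pow_mul_choose_mul_eq_fwdDiff_iter (f : R → R) (n : ℕ) :
    ∑ k ∈ range (n + 1), (-1 : R) ^ k * n.choose k * f k = (-1) ^ n * (Δ_[1])^[n] f 0 := by
  rw [fwdDiff_iter_eq_sum_shift, mul_sum]
  refine sum_congr rfl fun k hk => ?_
  have hsplit : (-1 : R) ^ n = (-1) ^ k * (-1) ^ (n - k) := by
    rw [← pow_add, Nat.add_sub_cancel' (Nat.lt_succ_iff.mp (mem_range.mp hk))]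
  have hsq : ((-1 : R) ^ (n - k)) ^ 2 = 1 := by rw [← pow_mul, pow_mul', neg_one_sq, one_pow]
  simp only [zsmul_eq_mul, Int.cast_mul, Int.cast_pow, Int.cast_neg, Int.cast_one,
    Int.cast_natCast, zero_add, nsmul_eq_mul, mul_one]
  linear_combination (-(-1 : R) ^ k * n.choose k * f k) * hsq -
    ((-1 : R) ^ (n - k) * n.choose k * f k) * hsplit

theorem Polynomial.sum_range_neg_one_pow_mul_choose_mul_eval {P : R[X]} {n : ℕ}
    (hP : P.natDegree = n) :
    ∑ k ∈ range (n + 1), (-1 : R) ^ k * n.choose k * P.eval (k : R) =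
      (-1) ^ n * n ! * P.leadingCoeff := by
  rw [sum_range_neg_one_pow_mul_choose_mul_eq_fwdDiff_iter (P.eval ·), ← hP,
    fwdDiff_iter_degree_eq_factorial]
  simp only [Pi.smul_apply, Pi.natCast_apply, smul_eq_mul]
  ring

/-- The finite-difference formula applied to `∏_{t ≠ i} (X - t)`, which vanishes at every node
but `i`. -/
theorem neg_one_pow_mul_choose_mul_prod_erase_sub {n i : ℕ} (hi : i ≤ n) :
    (-1 : R) ^ i * n.choose i * ∏ t ∈ (range (n + 1)).erase i, ((i : R) - t) =
      (-1) ^ n * n ! := by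
  nontriviality R
  have hi_mem : i ∈ range (n + 1) := mem_range.mpr (Nat.lt_succ_of_le hi)
  set L : R[X] := ∏ t ∈ (range (n + 1)).erase i, (X - C (t : R))
  have hL : L.Monic := monic_prod_of_monic _ _ fun t _ => monic_X_sub_C _
  have hdeg : L.natDegree = n := by
    rw [natDegree_prod_of_monic _ _ fun t _ => monic_X_sub_C _]
    simp only [natDegree_X_sub_C, sum_const, smul_eq_mul, mul_one, card_erase_of_mem hi_mem,
      card_range, Nat.add_sub_cancel]
  have h := sum_range_neg_one_pow_mul_choose_mul_eval hdeg
  rw [sum_eq_single_of_mem i hi_mem fun k hk hki => by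
    simp only [L, eval_prod, eval_sub, eval_X, eval_C]
    rw [prod_eq_zero (mem_erase.mpr ⟨hki, hk⟩) (sub_self _), mul_zero]] at h
  simpa [L, eval_prod, hL.leadingCoeff, -map_natCast] using h

end CommRing

section Field

variable {K : Type*} [Field K]

theorem fwdDiff_iter_inv_add (n : ℕ) (x : K) (hx : ∀ t ∈ range (n + 1), x + t ≠ 0) :
    (Δ_[1])^[n] (fun y => (x + y)⁻¹) 0 = (-1) ^ n * n ! / ∏ t ∈ range (n + 1), (x + t) := by
  induction n generalizing x with
  | zero => simp
  | succ n ih =>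
    have hx1 : ∀ t ∈ range (n + 1), x + 1 + t ≠ 0 := fun t ht => by
      convert hx (t + 1) (by simp at ht ⊢; omega) using 1; push_cast; ring
    have hshift : (Δ_[1])^[n] (fun y => (x + y)⁻¹) 1 =
        (Δ_[1])^[n] (fun y => (x + 1 + y)⁻¹) 0 := by
      have hfun : (fun y : K => (x + (y + 1))⁻¹) = fun y => (x + 1 + y)⁻¹ := by
        funext y; ring
      rw [← zero_add (1 : K), ← fwdDiff_iter_comp_add, zero_add, hfun]
    rw [Function.iterate_succ_apply', fwdDiff, zero_add, hshift, ih (x + 1) hx1,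
      ih x fun t ht => hx t (by simp at ht ⊢; omega)]
    have h0 : x ≠ 0 := by simpa using hx 0 (by simp)
    have hP : ∏ t ∈ range n, (x + 1 + t) ≠ 0 :=
      prod_ne_zero_iff.mpr fun t ht => hx1 t (by simp at ht ⊢; omega)
    have hlast : x + 1 + n ≠ 0 := hx1 n (by simp)
    have hshift_factor : ∀ t : ℕ, x + (t + 1) = x + 1 + t := fun t => by ring
    rw [prod_range_succ, prod_range_succ', prod_range_succ, prod_range_succ']
    simp only [Nat.cast_add, Nat.cast_one, Nat.cast_zero, add_zero, factorial_succ, Nat.cast_mul,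
      hshift_factor]
    field_simp
    ring

theorem sum_range_neg_one_pow_mul_choose_div_add (n : ℕ) (x : K)
    (hx : ∀ t ∈ range (n + 1), x + t ≠ 0) :
    ∑ k ∈ range (n + 1), (-1 : K) ^ k * n.choose k / (x + k) =
      n ! / ∏ t ∈ range (n + 1), (x + t) := by
  simp only [div_eq_mul_inv]
  rw [sum_range_neg_one_pow_mul_choose_mul_eq_fwdDiff_iter (fun y => (x + y)⁻¹),
    fwdDiff_iter_inv_add n x hx, ← mul_div_assoc, ← mul_assoc, ← mul_pow, div_eq_mul_inv]
  norm_num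

theorem Polynomial.sum_range_neg_one_pow_mul_choose_mul_eval_div_add {p : K[X]} {n : ℕ}
    (hp : p.Monic) (hdeg : p.natDegree = n + 1) (x : K) (hx : ∀ t ∈ range (n + 1), x + t ≠ 0) :
    ∑ k ∈ range (n + 1), (-1 : K) ^ k * n.choose k * (p.eval (k : K) / (x + k)) =
      (-1) ^ n * n ! + p.eval (-x) * n ! / ∏ t ∈ range (n + 1), (x + t) := by
  obtain ⟨g, hg⟩ := X_sub_C_dvd_sub_C_eval (p := p) (a := -x)
  have hsub : (p - C (p.eval (-x))).Monic ∧ (p - C (p.eval (-x))).natDegree = n + 1 :=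
    ⟨hp.sub_of_left (degree_C_le.trans_lt (natDegree_pos_iff_degree_pos.mp (by omega))),
      by rw [natDegree_sub_C, hdeg]⟩
  rw [hg] at hsub
  have hg_monic : g.Monic := (monic_X_sub_C _).of_mul_monic_left hsub.1
  have hg_deg : g.natDegree = n := by
    have := hsub.2
    rw [(monic_X_sub_C _).natDegree_mul hg_monic, natDegree_X_sub_C] at this
    omega
  have hsplit : ∀ k ∈ range (n + 1), p.eval (k : K) / (x + k) =
      g.eval (k : K) + p.eval (-x) * (x + k)⁻¹ := fun k hk => by
    have := congrArg (eval (k : K)) hg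
    simp only [eval_sub, eval_C, eval_mul, eval_X, sub_neg_eq_add] at this
    field_simp [hx k hk]
    linear_combination this
  have hrest : ∑ k ∈ range (n + 1), (-1 : K) ^ k * n.choose k * (p.eval (-x) * (x + k)⁻¹) =
      p.eval (-x) * ∑ k ∈ range (n + 1), (-1 : K) ^ k * n.choose k / (x + k) := by
    rw [mul_sum]; exact sum_congr rfl fun k _ => by ring
  rw [sum_congr rfl fun k hk => by rw [hsplit k hk], sum_congr rfl fun k _ => mul_add _ _ _,
    sum_add_distrib, sum_range_neg_one_pow_mul_choose_mul_eval hg_deg, hg_monic.leadingCoeff,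
    hrest, sum_range_neg_one_pow_mul_choose_div_add n x hx]
  ring

theorem prod_range_succ_natCast_add_eq_mul_factorial_mul_choose (n j : ℕ) :
    ∏ t ∈ range (n + 1), ((j : K) + t) = j * n ! * (n + j).choose j := by
  have h : ∏ t ∈ range n, (j + 1 + t) = n ! * (n + j).choose j := by
    rw [← ascFactorial_eq_prod_range, ascFactorial_eq_factorial_mul_choose, add_comm j n,
      Nat.choose_symm_add]
  rw [prod_range_succ', Nat.cast_zero, add_zero, mul_comm, mul_assoc, ← Nat.cast_mul, ← h,
    Nat.cast_prod]
  push_cast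
  exact congrArg _ (prod_congr rfl fun t _ => by ring)

noncomputable def nodePoly (n i : ℕ) : K[X] := X * ∏ t ∈ (range (n + 1)).erase i, (X + C (t : K))

theorem nodePoly_monic (n i : ℕ) : (nodePoly n i : K[X]).Monic :=
  monic_X.mul (monic_prod_of_monic _ _ fun _ _ => monic_X_add_C _)

theorem natDegree_nodePoly {n i : ℕ} (hi : i ≤ n) : (nodePoly n i : K[X]).natDegree = n + 1 := by
  rw [nodePoly, monic_X.natDegree_mul (monic_prod_of_monic _ _ fun _ _ => monic_X_add_C _),
    natDegree_prod_of_monic _ _ fun _ _ => monic_X_add_C _]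
  simp only [natDegree_X_add_C, sum_const, smul_eq_mul, mul_one, natDegree_X,
    card_erase_of_mem (mem_range.mpr (Nat.lt_succ_of_le hi)), card_range]
  omega

theorem add_mul_eval_nodePoly {n i : ℕ} (hi : i ≤ n) (x : K) :
    (x + i) * (nodePoly n i).eval x = x * ∏ t ∈ range (n + 1), (x + t) := by
  rw [← mul_prod_erase _ _ (mem_range.mpr (Nat.lt_succ_of_le hi))]
  simp only [nodePoly, eval_mul, eval_X, eval_prod, eval_add, eval_C]
  ring

theorem eval_nodePoly_neg_of_ne {n i i' : ℕ} (hi' : i' ≤ n) (h : i ≠ i') :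
    (nodePoly n i).eval (-(i' : K)) = 0 := by
  simp only [nodePoly, eval_mul, eval_X, eval_prod, eval_add, eval_C]
  rw [prod_eq_zero (mem_erase.mpr ⟨h.symm, mem_range.mpr (Nat.lt_succ_of_le hi')⟩)
    (neg_add_cancel _), mul_zero]

theorem neg_one_pow_mul_choose_mul_eval_nodePoly_neg {n i : ℕ} (hi : i ≤ n) :
    (-1 : K) ^ i * n.choose i * (nodePoly n i).eval (-(i : K)) = -(i * n !) := by
  have h := neg_one_pow_mul_choose_mul_prod_erase_sub (R := K) hi
  have hflip : ∏ t ∈ (range (n + 1)).erase i, (-(i : K) + t) =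
      (-1) ^ n * ∏ t ∈ (range (n + 1)).erase i, ((i : K) - t) := by
    rw [prod_congr rfl fun (t : ℕ) _ => show -(i : K) + t = -1 * (i - t) by ring,
      prod_mul_distrib, prod_const, card_erase_of_mem (mem_range.mpr (Nat.lt_succ_of_le hi)),
      card_range, Nat.succ_sub_one]
  have hsq : (-1 : K) ^ n * (-1) ^ n = 1 := by rw [← mul_pow]; norm_num
  simp only [nodePoly, eval_mul, eval_X, eval_prod, eval_add, eval_C]
  rw [hflip]
  linear_combination (-(i : K)) * (-1) ^ n * h - (i : K) * n ! * hsq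

theorem sum_mul_two_mul_sq_sub_sum_sq {ι κ : Type*} (s : Finset ι) (t : Finset κ) (w : ι → K)
    (e : ι → κ → K) :
    ∑ j ∈ s, w j * (2 * (∑ i ∈ t, e j i) ^ 2 - ∑ i ∈ t, e j i ^ 2) =
      2 * ∑ i ∈ t, ∑ i' ∈ t, ∑ j ∈ s, w j * (e j i * e j i') -
        ∑ i ∈ t, ∑ j ∈ s, w j * (e j i * e j i) := by
  simp only [sq, sum_mul_sum]
  simp only [mul_sub, mul_sum, sum_sub_distrib]
  rw [sum_comm, sum_comm (s := s)]
  congr 2 with i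
  rw [sum_comm]
  exact sum_congr rfl fun i' _ => sum_congr rfl fun j _ => by ring

variable [CharZero K]

theorem sum_range_neg_one_pow_mul_choose_mul_sq_div_add_mul_add {n i i' : ℕ} (hi : i ≤ n)
    (hi0 : 0 < i) (hi'0 : 0 < i') :
    ∑ j ∈ range (n + 1), (-1 : K) ^ j * (n + j).choose j * n.choose j * (j : K) ^ 2 /
        ((j + i) * (j + i')) =
      (-1) ^ n + (nodePoly n i).eval (-(i' : K)) / (i' * n ! * (n + i').choose i') := by
  have hfac : (n ! : K) ≠ 0 := by exact_mod_cast n.factorial_ne_zero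
  have hi' : (i' : K) ≠ 0 := by exact_mod_cast hi'0.ne'
  have hterm : ∀ j : ℕ, (-1 : K) ^ j * (n + j).choose j * n.choose j * (j : K) ^ 2 /
      ((j + i) * (j + i')) =
      (-1 : K) ^ j * n.choose j * ((nodePoly n i).eval (j : K) / (i' + j)) / n ! := fun j => by
    have h := add_mul_eval_nodePoly (K := K) hi j
    rw [prod_range_succ_natCast_add_eq_mul_factorial_mul_choose] at h
    have : (j : K) + i ≠ 0 := by norm_cast; omega
    have : (j : K) + i' ≠ 0 := by norm_cast; omega
    rw [add_comm (i' : K)]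
    field_simp
    linear_combination -(n.choose j : K) * h
  rw [sum_congr rfl fun j _ => hterm j, ← sum_div,
    sum_range_neg_one_pow_mul_choose_mul_eval_div_add (nodePoly_monic n i) (natDegree_nodePoly hi)
      (i' : K) fun t _ => by norm_cast; omega,
    prod_range_succ_natCast_add_eq_mul_factorial_mul_choose]
  have : ((n + i').choose i' : K) ≠ 0 := by exact_mod_cast (Nat.choose_pos (by omega)).ne'
  field_simp

theorem sum_Icc_neg_one_pow_mul_choose_mul_sq_div_add_mul_add {n i i' : ℕ} (hi : i ∈ Icc 1 n)
    (hi' : i' ∈ Icc 1 n) :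
    ∑ j ∈ Icc 1 n, (-1 : K) ^ j * (n + j).choose j * n.choose j * (j : K) ^ 2 /
        ((j + i) * (j + i')) =
      (-1) ^ n - if i = i' then (-1 : K) ^ i / ((n + i).choose i * n.choose i) else 0 := by
  rw [mem_Icc] at hi hi'
  have hIcc : Icc 1 n = (range (n + 1)).erase 0 := by ext; simp; omega
  rw [hIcc, sum_erase _ (by simp), sum_range_neg_one_pow_mul_choose_mul_sq_div_add_mul_add hi.2
    hi.1 hi'.1]
  split_ifs with h
  · subst h
    have heval := neg_one_pow_mul_choose_mul_eval_nodePoly_neg (K := K) hi.2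
    have hsq : (-1 : K) ^ i * (-1) ^ i = 1 := by rw [← mul_pow]; norm_num
    have : (i : K) ≠ 0 := by norm_cast; omega
    have : (n ! : K) ≠ 0 := by exact_mod_cast n.factorial_ne_zero
    have : ((n + i).choose i : K) ≠ 0 := by exact_mod_cast (Nat.choose_pos (by omega)).ne'
    have : (n.choose i : K) ≠ 0 := by exact_mod_cast (Nat.choose_pos hi.2).ne'
    field_simp
    linear_combination (-1 : K) ^ i * heval -
      (n.choose i : K) * (nodePoly n i).eval (-(i : K)) * hsq
  · rw [eval_nodePoly_neg_of_ne hi'.2 h, zero_div, sub_zero, add_zero]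

end Field

theorem sum_Icc_add_sub_sum_Icc {M : Type*} [AddCommGroup M] (f : ℕ → M) (n j : ℕ) :
    ∑ t ∈ Icc 1 (n + j), f t - ∑ t ∈ Icc 1 j, f t = ∑ i ∈ Icc 1 n, f (j + i) := by
  have hshift : Ioc j (n + j) = (Ioc 0 n).image (j + ·) := by
    rw [image_add_left_Ioc, add_zero, add_comm]
  rw [← zero_add 1, Icc_add_one_left_eq_Ioc, Icc_add_one_left_eq_Ioc, Icc_add_one_left_eq_Ioc,
    ← sum_Ioc_consecutive f (Nat.zero_le j) (Nat.le_add_left j n), add_sub_cancel_left, hshift,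
    sum_image fun a _ b _ h => Nat.add_left_cancel h]

theorem H_add_sub_H (n j : ℕ) : H (n + j) - H j = ∑ i ∈ Icc 1 n, 1 / ((j : ℚ) + i) := by
  rw [H, H, sum_Icc_add_sub_sum_Icc (fun t => 1 / (t : ℚ))]
  push_cast; rfl

theorem H2_add_sub_H2 (n j : ℕ) : H2 (n + j) - H2 j = ∑ i ∈ Icc 1 n, 1 / ((j : ℚ) + i) ^ 2 := by
  rw [H2, H2, sum_Icc_add_sub_sum_Icc (fun t => 1 / (t : ℚ) ^ 2)]
  push_cast; rfl

theorem stmt_3_general (n : ℕ) :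
    (∑ j ∈ Icc 1 n, (-1 : ℚ) ^ j * (Nat.choose (n + j) j) * (Nat.choose n j) * (j : ℚ) ^ 2 *
        (2 * (H (n + j) - H j) ^ 2 - (H2 (n + j) - H2 j)))
      + ∑ j ∈ Icc 1 n, (-1 : ℚ) ^ j / ((Nat.choose (n + j) j : ℚ) * (Nat.choose n j)) =
      (n : ℚ) * (2 * n - 1) * (-1 : ℚ) ^ n := by
  have hK : ∀ i ∈ Icc 1 n, ∀ i' ∈ Icc 1 n, ∑ j ∈ Icc 1 n, (-1 : ℚ) ^ j *
      (Nat.choose (n + j) j) * (Nat.choose n j) * (j : ℚ) ^ 2 * (1 / (j + i) * (1 / (j + i'))) =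
      (-1) ^ n - if i = i' then (-1 : ℚ) ^ i / ((n + i).choose i * n.choose i) else 0 :=
    fun i hi i' hi' => by
      rw [← sum_Icc_neg_one_pow_mul_choose_mul_sq_div_add_mul_add hi hi']
      exact sum_congr rfl fun j _ => by rw [one_div_mul_one_div, mul_one_div]
  simp only [H_add_sub_H, H2_add_sub_H2, ← one_div_pow]
  rw [sum_mul_two_mul_sq_sub_sum_sq, sum_congr rfl fun i hi => sum_congr rfl fun i' hi' =>
    hK i hi i' hi', sum_congr rfl fun i hi => hK i hi i hi]
  simp only [sum_sub_distrib, sum_const, card_Icc, Nat.add_sub_cancel, nsmul_eq_mul, if_pos]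
  rw [sum_congr rfl fun i hi => by rw [sum_ite_eq, if_pos hi]]
  ring

theorem stmt_3 (n : ℕ) (hn : 0 < n) :
    (∑ j ∈ Icc 1 n, (-1 : ℚ) ^ j * (Nat.choose (n + j) j) * (Nat.choose n j) * (j : ℚ) ^ 2 *
        (2 * (H (n + j) - H j) ^ 2 - (H2 (n + j) - H2 j)))
      + ∑ j ∈ Icc 1 n, (-1 : ℚ) ^ j / ((Nat.choose (n + j) j : ℚ) * (Nat.choose n j)) =
      (n : ℚ) * (2 * n - 1) * (-1 : ℚ) ^ n :=
  stmt_3_general n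
end

section
/- For every natural number n, ∑_{k=0}^{n} (-1)^k · C(n+k,k) · C(n,k) · k · H_k = (-1)^n · n(n+1) · (2H_n − 1), as an identity of rational numbers. -/
open Finset

open Polynomial

/-!
Write `a(n,k) = (-1)^k C(n+k,k) C(n,k)` for the coefficients of the shifted Legendre polynomial
`P̃ₙ` and `S(n) = ∑ₖ a(n,k) k H_k`. The summand `F(n,k) = a(n,k) k H_k` satisfies the
creative-telescoping relation `(n+2) F(n,k) + n F(n+1,k) + 2n(n+2) a(n,k) = G(n,k+1) - G(n,k)`
with a certificate `G(n,·)` vanishing at `0` and `n+2`. Summing over `k`, and using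
`∑ₖ a(n,k) = P̃ₙ(1) = (-1)^n` (symmetry of `P̃ₙ` under `x ↦ 1 - x`), gives
`(n+2) S(n) + n S(n+1) + 2n(n+2)(-1)^n = 0`, and the closed form follows by induction on `n`.
-/

lemma H_succ (k : ℕ) : H (k + 1) = H k + 1 / ((k : ℚ) + 1) := by
  rw [H, H, sum_Icc_succ_top (Nat.le_add_left 1 k)]
  push_cast
  ring

def legendreCoeff (n k : ℕ) : ℚ := (-1) ^ k * (n + k).choose k * n.choose k

lemma legendreCoeff_of_lt {n k : ℕ} (h : n < k) : legendreCoeff n k = 0 := by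
  simp [legendreCoeff, Nat.choose_eq_zero_of_lt h]

theorem sum_legendreCoeff (n : ℕ) : ∑ k ∈ range (n + 1), legendreCoeff n k = (-1) ^ n := by
  have h := shiftedLegendre_eval_symm n (1 : ℚ)
  rw [sub_self, ← coeff_zero_eq_aeval_zero', coeff_shiftedLegendre] at h
  simp only [shiftedLegendre, map_sum, aeval_C, aeval_X_pow, map_mul, one_pow, mul_one] at h
  simpa [legendreCoeff, ← Nat.choose_symm_add, mul_comm, mul_left_comm] using h

/-- Both `legendreCoeff n k` and `legendreCoeff (n + 1) k` are multiples of this term by rational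
functions of `n, k` with nonvanishing denominators, which turns the telescoping relation into an
identity of rational functions. -/
def bridgeCoeff (n k : ℕ) : ℚ := (-1) ^ k * (n + k).choose k * (n + 1).choose k

lemma cast_choose_succ_right_mul {R : Type*} [CommRing R] (n k : ℕ) :
    (n.choose (k + 1) : R) * (k + 1) = n.choose k * (n - k) := by
  rcases le_or_gt k n with h | h
  · rw [← Nat.cast_sub h]
    exact_mod_cast congrArg (Nat.cast (R := R)) (Nat.choose_succ_right_eq n k)
  · simp [Nat.choose_eq_zero_of_lt h, Nat.choose_eq_zero_of_lt (h.trans (Nat.lt_succ_self k))]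

lemma cast_add_one_mul_choose {R : Type*} [CommRing R] (n k : ℕ) :
    ((n : R) + 1) * n.choose k = (n + 1).choose (k + 1) * (k + 1) := by
  exact_mod_cast congrArg (Nat.cast (R := R)) (Nat.add_one_mul_choose_eq n k)

lemma legendreCoeff_eq_bridgeCoeff (n k : ℕ) :
    legendreCoeff n k = (n + 1 - k) / (n + 1) * bridgeCoeff n k := by
  have h := (cast_add_one_mul_choose (R := ℚ) n k).trans (cast_choose_succ_right_mul (n + 1) k)
  push_cast at h
  rw [legendreCoeff, bridgeCoeff, div_mul_eq_mul_div, eq_div_iff (by positivity)]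
  linear_combination (-1) ^ k * ((n + k).choose k : ℚ) * h

lemma legendreCoeff_succ_eq_bridgeCoeff (n k : ℕ) :
    legendreCoeff (n + 1) k = (n + k + 1) / (n + 1) * bridgeCoeff n k := by
  have h := (cast_add_one_mul_choose (R := ℚ) (n + k) k).trans
    (cast_choose_succ_right_mul (n + k + 1) k)
  push_cast at h
  rw [legendreCoeff, bridgeCoeff, add_right_comm, div_mul_eq_mul_div, eq_div_iff (by positivity)]
  linear_combination -(-1) ^ k * ((n + 1).choose k : ℚ) * h

lemma bridgeCoeff_succ (n k : ℕ) :
    bridgeCoeff n (k + 1) = -((n + k + 1) * (n + 1 - k)) / (k + 1) ^ 2 * bridgeCoeff n k := by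
  have h₁ := cast_add_one_mul_choose (R := ℚ) (n + k) k
  have h₂ := cast_choose_succ_right_mul (R := ℚ) (n + 1) k
  push_cast at h₁ h₂
  rw [bridgeCoeff, bridgeCoeff, ← add_assoc, div_mul_eq_mul_div, eq_div_iff (by positivity)]
  linear_combination (-1) ^ (k + 1) * (((n + k + 1).choose (k + 1) * (k + 1) : ℚ) * h₂
    - ((n + 1).choose k * (n + 1 - k) : ℚ) * h₁)

def wzCertificate (n j : ℕ) : ℚ :=
  bridgeCoeff n j * ((2 * j ^ 2 - 2 * j ^ 3) * H j + 2 * j ^ 3 - 2 * j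
    - 2 * n * (n + 2) * j ^ 2 / (n + 1)) / (n + 1)

lemma wzCertificate_succ_sub (n k : ℕ) :
    (n + 2) * (legendreCoeff n k * k * H k) + n * (legendreCoeff (n + 1) k * k * H k)
      + 2 * n * (n + 2) * legendreCoeff n k = wzCertificate n (k + 1) - wzCertificate n k := by
  rw [wzCertificate, wzCertificate, bridgeCoeff_succ, H_succ, legendreCoeff_eq_bridgeCoeff,
    legendreCoeff_succ_eq_bridgeCoeff]
  push_cast
  field_simp
  ring

def legendreHarmonicSum (n : ℕ) : ℚ := ∑ k ∈ range (n + 1), legendreCoeff n k * k * H k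

lemma legendreHarmonicSum_recurrence (n : ℕ) :
    (n + 2) * legendreHarmonicSum n + n * legendreHarmonicSum (n + 1)
      + 2 * n * (n + 2) * (-1) ^ n = 0 := by
  have hG : ∑ k ∈ range (n + 2), (wzCertificate n (k + 1) - wzCertificate n k) = 0 := by
    rw [sum_range_sub]
    simp [wzCertificate, bridgeCoeff]
  simp only [← wzCertificate_succ_sub, sum_add_distrib, ← mul_sum] at hG
  rw [sum_range_succ (fun k => legendreCoeff n k * k * H k), sum_range_succ (legendreCoeff n),
    legendreCoeff_of_lt (Nat.lt_succ_self n), sum_legendreCoeff] at hG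
  simpa [legendreHarmonicSum] using hG

theorem stmt_5 (n : ℕ) :
    ∑ k ∈ range (n + 1), (-1 : ℚ) ^ k * (Nat.choose (n + k) k) * (Nat.choose n k) * k * H k =
      (-1 : ℚ) ^ n * (n * (n + 1)) * (2 * H n - 1) := by
  show legendreHarmonicSum n = _
  induction n with
  | zero => simp [legendreHarmonicSum]
  | succ n ih =>
    rcases n.eq_zero_or_pos with rfl | hn
    · simp [legendreHarmonicSum, legendreCoeff, sum_range_succ, H]
      norm_num
    · have hrec := legendreHarmonicSum_recurrence n
      rw [ih] at hrec
      rw [H_succ]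
      push_cast
      field_simp
      apply mul_left_cancel₀ (Nat.cast_ne_zero.mpr hn.ne' : (n : ℚ) ≠ 0)
      linear_combination hrec
end
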